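/- (Variant of the Hales–Jewett theorem with partition regular family, Beiglböck) Let 𝔽 be a partition regular family of finite subsets of ℕ containing no singletons, and let 𝒜 be a finite alphabet. For every finite coloring of the set L(𝒜) of located words in 𝒜, there exist a located word α, a finite set γ ⊆ ℕ, and F ∈ 𝔽 such that Dom(α), γ, F are pairwise disjoint and the set {α ∪ ((γ ∪ {t}) × {s}) : s ∈ 𝒜, t ∈ F} is monochromatic. -/

import Mathlib

open Filter Set

attribute [local instance] Ultrafilter.semigroup

namespace BHJ

/-- priority-left merge of options -/
def ow {A : Type*} : Option A → Option A → Option A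
  | some a, _ => some a
  | none, b => b

@[simp] lemma ow_none_left {A : Type*} (b : Option A) : ow none b = b := rfl
@[simp] lemma ow_some_left {A : Type*} (a : A) (b : Option A) : ow (some a) b = some a := rfl

lemma ow_eq_none {A : Type*} {a b : Option A} (ha : a = none) (hb : b = none) :
    ow a b = none := by subst ha; subst hb; rfl

lemma ow_assoc {A : Type*} (a b c : Option A) : ow (ow a b) c = ow a (ow b c) := by
  cases a <;> rfl

/-- the word semigroup: located words as total functions, merged with left priority -/
def wsg (A : Type*) : Semigroup (ℕ → Option A) where
  mul f g := fun n => ow (f n) (g n)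
  mul_assoc f g h := funext fun n => ow_assoc _ _ _

attribute [local instance] wsg

lemma wmul_apply {A : Type*} (f g : ℕ → Option A) (n : ℕ) : (f * g) n = ow (f n) (g n) := rfl

lemma vmul_apply {A : Type*} (u v : A → ℕ → Option A) (s : A) : (u * v) s = u s * v s := rfl

/-- membership in product of ultrafilters -/
lemma umem_mul {M : Type*} [Semigroup M] {x y : Ultrafilter M} {s : Set M} :
    s ∈ x * y ↔ {a | {b | a * b ∈ s} ∈ y} ∈ x := by
  have h := Ultrafilter.eventually_mul x y (· ∈ s)
  simp only [Filter.eventually_iff, Ultrafilter.mem_coe, Set.setOf_mem_eq] at h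
  exact h

lemma mem_mul_of_closed {M : Type*} [Semigroup M] {x y : Ultrafilter M} {S : Set M}
    (h : ∀ a ∈ S, ∀ b ∈ S, a * b ∈ S) (hx : S ∈ x) (hy : S ∈ y) : S ∈ x * y := by
  rw [umem_mul]
  exact mem_of_superset hx fun a ha => mem_of_superset hy fun b hb => h a ha b hb

/-- pushforward along a semigroup hom is multiplicative -/
lemma umap_mul {M N : Type*} [Semigroup M] [Semigroup N] (f : M → N)
    (hf : ∀ a b, f (a * b) = f a * f b) (x y : Ultrafilter M) :
    Ultrafilter.map f (x * y) = Ultrafilter.map f x * Ultrafilter.map f y := by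
  ext s
  rw [Ultrafilter.mem_map, umem_mul, umem_mul, Ultrafilter.mem_map]
  refine Iff.of_eq (congrArg (· ∈ x) ?_)
  ext a
  simp only [Set.mem_preimage, Set.mem_setOf_eq, Ultrafilter.mem_map]
  refine Iff.of_eq (congrArg (· ∈ y) ?_)
  ext b
  simp [hf]

/-- pushforward is continuous -/
lemma ucont_map {M N : Type*} (f : M → N) : Continuous (Ultrafilter.map f) := by
  refine ultrafilterBasis_is_basis.continuous_iff.2 <| Set.forall_mem_range.mpr fun s => ?_
  have : Ultrafilter.map f ⁻¹' {u : Ultrafilter N | s ∈ u} = {x : Ultrafilter M | f ⁻¹' s ∈ x} := by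
    ext x; simp [Ultrafilter.mem_map]
  rw [this]
  exact ultrafilter_isOpen_basic _

lemma pure_one_mul {M : Type*} [Semigroup M] (e : M) (he : ∀ m, e * m = m) (x : Ultrafilter M) :
    (pure e : Ultrafilter M) * x = x := by
  ext s
  rw [umem_mul]
  simp only [Ultrafilter.mem_pure, Set.mem_setOf_eq, he, Set.setOf_mem_eq]

/-- minimal closed left ideals: existence and key factorization property -/
lemma exists_min_cli {G : Type*} [Semigroup G] [TopologicalSpace G] [T2Space G] [CompactSpace G]
    (hc : ∀ r : G, Continuous (· * r)) (T C₀ : Set G)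
    (hTmul : ∀ x ∈ T, ∀ y ∈ T, x * y ∈ T) (hTcl : IsClosed T)
    (hC₀T : C₀ ⊆ T) (hC₀cl : IsClosed C₀) (hC₀ne : C₀.Nonempty)
    (hC₀li : ∀ x ∈ T, ∀ c ∈ C₀, x * c ∈ C₀) :
    ∃ Λ, Λ ⊆ C₀ ∧ Λ.Nonempty ∧ IsClosed Λ ∧ (∀ x ∈ T, ∀ c ∈ Λ, x * c ∈ Λ) ∧
      (∀ f ∈ Λ, (fun x => x * f) '' T = Λ) := by
  classical
  set S : Set (Set G) :=
    {C | C ⊆ C₀ ∧ C.Nonempty ∧ IsClosed C ∧ ∀ x ∈ T, ∀ c ∈ C, x * c ∈ C} with hS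
  have hzorn : ∀ c ⊆ S, IsChain (· ⊆ ·) c → c.Nonempty → ∃ lb ∈ S, ∀ s ∈ c, lb ⊆ s := by
    intro c hcs hchain hcne
    refine ⟨⋂₀ c, ⟨?_, ?_, ?_, ?_⟩, fun s hs => Set.sInter_subset_of_mem hs⟩
    · obtain ⟨t, ht⟩ := hcne
      exact (Set.sInter_subset_of_mem ht).trans (hcs ht).1
    · have : (⋂ t : c, (t : Set G)).Nonempty := by
        haveI : Nonempty c := hcne.coe_sort
        refine IsCompact.nonempty_iInter_of_directed_nonempty_isCompact_isClosed
          (fun t : c => (t : Set G)) ?_ (fun t => (hcs t.prop).2.1)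
          (fun t => (hcs t.prop).2.2.1.isCompact) (fun t => (hcs t.prop).2.2.1)
        exact DirectedOn.directed_val (IsChain.directedOn hchain.symm)
      rwa [Set.sInter_eq_iInter]
    · exact isClosed_sInter fun t ht => (hcs ht).2.2.1
    · intro x hx cc hcc
      rw [Set.mem_sInter] at hcc ⊢
      exact fun t ht => (hcs ht).2.2.2 x hx cc (hcc t ht)
  obtain ⟨Λ, hΛC₀, hΛmin⟩ := zorn_superset_nonempty S hzorn C₀ ⟨subset_rfl, hC₀ne, hC₀cl, hC₀li⟩
  obtain ⟨hsub, hne, hcl, hli⟩ := hΛmin.prop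
  have hTne : T.Nonempty := hC₀ne.mono hC₀T
  have hfac : ∀ f ∈ Λ, (fun x => x * f) '' T = Λ := by
    intro f hf
    have hmem : ((fun x => x * f) '' T) ∈ S := by
      refine ⟨?_, hTne.image _, ?_, ?_⟩
      · rintro _ ⟨x, hx, rfl⟩; exact hC₀li x hx f (hsub hf)
      · exact ((hTcl.isCompact.image (hc f)).isClosed)
      · rintro z hz _ ⟨x, hx, rfl⟩
        exact ⟨z * x, hTmul z hz x hx, mul_assoc z x f⟩
    have hss : ((fun x => x * f) '' T) ⊆ Λ := by
      rintro _ ⟨x, hx, rfl⟩; exact hli x hx f hf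
    exact hΛmin.eq_of_subset hmem hss
  exact ⟨Λ, hsub, hne, hcl, hli, hfac⟩


section UF


/-- the FIP core: finitely many sets whose complements contain no 𝔽-set have a common
element above any bound -/
lemma fip_core (𝔽 : Set (Finset ℕ)) (hPR : ∀ (r : ℕ) (κ : ℕ → Fin r), ∃ (i : Fin r) (F : Finset ℕ),
      F ∈ 𝔽 ∧ ∀ n ∈ F, κ n = i)
    (hNS : ∀ F ∈ 𝔽, F.card ≠ 1) (hne : ∅ ∉ 𝔽)
    (S' : Set (Set ℕ)) (hfin : S'.Finite)
    (h1 : ∀ C ∈ S', ¬ ∃ F ∈ 𝔽, (F : Set ℕ) ⊆ Cᶜ) (N : ℕ) :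
    ∃ t, (∀ C ∈ S', t ∈ C) ∧ N < t := by
  classical
  let K := Fin (N + 1) ⊕ ({C // C ∈ hfin.toFinset} ⊕ Unit)
  let κ : ℕ → K := fun t =>
    if h : t ≤ N then Sum.inl ⟨t, by omega⟩
    else if h2 : ∃ C ∈ S', t ∉ C then
      Sum.inr (Sum.inl ⟨h2.choose, by
        rw [Set.Finite.mem_toFinset]; exact h2.choose_spec.1⟩)
    else Sum.inr (Sum.inr ())
  obtain ⟨i, F, hF, hmono⟩ := hPR (Fintype.card K) ((Fintype.equivFin K) ∘ κ)
  have hFne : F.Nonempty := by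
    rcases Finset.eq_empty_or_nonempty F with h | h
    · exact absurd (h ▸ hF) hne
    · exact h
  obtain ⟨t₀, ht₀⟩ := hFne
  have hconst : ∀ t ∈ F, κ t = κ t₀ := by
    intro t ht
    have : (Fintype.equivFin K) (κ t) = (Fintype.equivFin K) (κ t₀) := by
      have h1' := hmono t ht
      have h2' := hmono t₀ ht₀
      simp only [Function.comp_apply] at h1' h2'
      rw [h1', h2']
    exact (Fintype.equivFin K).injective this
  by_cases h : t₀ ≤ N
  · exfalso
    have hk : κ t₀ = Sum.inl ⟨t₀, by omega⟩ := by simp only [κ]; rw [dif_pos h]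
    have hsub : F ⊆ {t₀} := by
      intro t ht
      have ht' := (hconst t ht).trans hk
      by_cases ha : t ≤ N
      · have : κ t = Sum.inl ⟨t, by omega⟩ := by simp only [κ]; rw [dif_pos ha]
        rw [this] at ht'
        have := Sum.inl.inj ht'
        have : t = t₀ := by
          have := congrArg Fin.val this
          simpa using this
        simp [this]
      · by_cases hb : ∃ C ∈ S', t ∉ C
        · have : κ t = Sum.inr (Sum.inl ⟨hb.choose, by
            rw [Set.Finite.mem_toFinset]; exact hb.choose_spec.1⟩) := by
            simp only [κ]; rw [dif_neg ha, dif_pos hb]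
          rw [this] at ht'
          exact nomatch ht'
        · have : κ t = Sum.inr (Sum.inr ()) := by
            simp only [κ]; rw [dif_neg ha, dif_neg hb]
          rw [this] at ht'
          exact nomatch ht'
    rcases Finset.subset_singleton_iff.1 hsub with hh | hh
    · exact hne (hh ▸ hF)
    · exact hNS F hF (by rw [hh]; simp)
  · by_cases h2 : ∃ C ∈ S', t₀ ∉ C
    · exfalso
      have hk : κ t₀ = Sum.inr (Sum.inl ⟨h2.choose, by
          rw [Set.Finite.mem_toFinset]; exact h2.choose_spec.1⟩) := by
        simp only [κ]; rw [dif_neg h, dif_pos h2]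
      refine h1 h2.choose h2.choose_spec.1 ⟨F, hF, ?_⟩
      intro t ht
      have ht' := (hconst t ht).trans hk
      by_cases ha : t ≤ N
      · have : κ t = Sum.inl ⟨t, by omega⟩ := by simp only [κ]; rw [dif_pos ha]
        rw [this] at ht'
        exact nomatch ht'
      · by_cases hb : ∃ C ∈ S', t ∉ C
        · have hkt : κ t = Sum.inr (Sum.inl ⟨hb.choose, by
            rw [Set.Finite.mem_toFinset]; exact hb.choose_spec.1⟩) := by
            simp only [κ]; rw [dif_neg ha, dif_pos hb]
          rw [hkt] at ht'
          have := Sum.inl.inj (Sum.inr.inj ht')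
          have hCeq : hb.choose = h2.choose := congrArg Subtype.val this
          have := hb.choose_spec.2
          rw [hCeq] at this
          exact this
        · have : κ t = Sum.inr (Sum.inr ()) := by
            simp only [κ]; rw [dif_neg ha, dif_neg hb]
          rw [this] at ht'
          exact nomatch ht'
    · push_neg at h2
      exact ⟨t₀, h2, by omega⟩

/-- existence of an ultrafilter every member of which contains an 𝔽-set above any bound -/
lemma exists_good_uf (𝔽 : Set (Finset ℕ)) (hPR : ∀ (r : ℕ) (κ : ℕ → Fin r), ∃ (i : Fin r) (F : Finset ℕ),
      F ∈ 𝔽 ∧ ∀ n ∈ F, κ n = i)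
    (hNS : ∀ F ∈ 𝔽, F.card ≠ 1) (hne : ∅ ∉ 𝔽) :
    ∃ 𝔭 : Ultrafilter ℕ, (∀ n : ℕ, Set.Ioi n ∈ 𝔭) ∧
      (∀ B ∈ 𝔭, ∀ n : ℕ, ∃ F ∈ 𝔽, (F : Set ℕ) ⊆ B ∩ Set.Ioi n) := by
  classical
  set G1 : Set (Set ℕ) := {B | ¬ ∃ F ∈ 𝔽, (F : Set ℕ) ⊆ Bᶜ} with hG1
  set Gen : Set (Set ℕ) := G1 ∪ Set.range Set.Ioi with hGen
  have hnebot : (Filter.generate Gen).NeBot := by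
    rw [Filter.generate_neBot_iff]
    intro t hts htfin
    set S' : Set (Set ℕ) := t ∩ G1 with hS'
    have hS'fin : S'.Finite := htfin.inter_of_left _
    have hrest : ∀ C ∈ t, C ∉ G1 → ∃ m, C = Set.Ioi m := by
      intro C hCt hCG1
      rcases hts hCt with h | h
      · exact absurd h hCG1
      · obtain ⟨m, hm⟩ := h; exact ⟨m, hm.symm⟩
    -- bound for the Ioi-part
    have hMS : {m | Set.Ioi m ∈ t}.Finite := by
      have : Set.InjOn Set.Ioi {m | Set.Ioi m ∈ t} := by
        intro a _ b _ hab
        by_contra hne'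
        rcases Nat.lt_or_ge a b with h | h
        · have : b ∈ Set.Ioi a := h
          rw [hab] at this; exact absurd this (by simp)
        · have hlt : b < a := by omega
          have : a ∈ Set.Ioi b := hlt
          rw [← hab] at this; exact absurd this (by simp)
      exact Set.Finite.of_finite_image (htfin.subset (by
        rintro _ ⟨m, hm, rfl⟩; exact hm)) (by
          intro a ha b hb hab
          exact this ha hb hab)
    set N := hMS.toFinset.sup id with hN
    obtain ⟨t₀, ht₀1, ht₀2⟩ := fip_core 𝔽 hPR hNS hne S' hS'fin
      (fun C hC => hC.2) N
    refine ⟨t₀, ?_⟩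
    rw [Set.mem_sInter]
    intro C hCt
    by_cases hCG1 : C ∈ G1
    · exact ht₀1 C ⟨hCt, hCG1⟩
    · obtain ⟨m, rfl⟩ := hrest C hCt hCG1
      have hm : m ∈ hMS.toFinset := by rw [Set.Finite.mem_toFinset]; exact hCt
      have : m ≤ N := Finset.le_sup (f := id) hm
      simp only [Set.mem_Ioi]
      omega
  refine ⟨@Ultrafilter.of _ (Filter.generate Gen) hnebot, ?_, ?_⟩
  · intro n
    exact (@Ultrafilter.of_le _ (Filter.generate Gen) hnebot)
      (Filter.mem_generate_of_mem (Or.inr ⟨n, rfl⟩))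
  · intro B hB n
    by_contra hcon
    have hC : (B ∩ Set.Ioi n)ᶜ ∈ G1 := by
      rw [hG1, Set.mem_setOf_eq, compl_compl]
      exact hcon
    have h1 : (B ∩ Set.Ioi n)ᶜ ∈ (@Ultrafilter.of _ (Filter.generate Gen) hnebot) :=
      (@Ultrafilter.of_le _ (Filter.generate Gen) hnebot)
        (Filter.mem_generate_of_mem (Or.inl hC))
    have h2 : B ∩ Set.Ioi n ∈ (@Ultrafilter.of _ (Filter.generate Gen) hnebot) := by
      refine Filter.inter_mem hB ?_
      exact (@Ultrafilter.of_le _ (Filter.generate Gen) hnebot)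
        (Filter.mem_generate_of_mem (Or.inr ⟨n, rfl⟩))
    obtain ⟨z, hz⟩ := Ultrafilter.nonempty_of_mem (Filter.inter_mem h1 h2)
    exact hz.1 hz.2

end UF
section Core

variable (A : Type*)

/-- configuration: located word `α` together with variable positions `γ` -/
def cfg (α : ℕ → Option A) (γ : Finset ℕ) : A → ℕ → Option A :=
  fun s n => if n ∈ γ then some s else α n

def vt (t : ℕ) : A → ℕ → Option A := cfg A (fun _ => none) {t}

def oneW : ℕ → Option A := fun _ => none

def UP (P : Set ℕ) : Set (A → ℕ → Option A) :=
  {u | ∃ α γ, u = cfg A α γ ∧ (↑γ : Set ℕ) ⊆ P ∧ {n | α n ≠ none} ⊆ P ∧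
    {n | α n ≠ none}.Finite ∧ ∀ n ∈ γ, α n = none}

def WP (P : Set ℕ) : Set (ℕ → Option A) :=
  {w | {n | w n ≠ none} ⊆ P ∧ {n | w n ≠ none}.Finite}

variable {A}

lemma oneW_mul (m : ℕ → Option A) : (oneW A) * m = m := funext fun _ => rfl

lemma oneW_mem_WP (P : Set ℕ) : oneW A ∈ WP A P := by
  constructor
  · intro n hn; exact absurd rfl hn
  · convert Set.finite_empty using 1
    ext n; simp [oneW]

lemma WP_mul {P : Set ℕ} : ∀ w ∈ WP A P, ∀ w' ∈ WP A P, w * w' ∈ WP A P := by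
  intro w hw w' hw'
  have hsub : {n | (w * w') n ≠ none} ⊆ {n | w n ≠ none} ∪ {n | w' n ≠ none} := by
    intro n hn
    simp only [Set.mem_setOf_eq, wmul_apply] at hn
    by_cases h : w n = none
    · right; rw [h] at hn; simpa using hn
    · left; exact h
  constructor
  · exact hsub.trans (Set.union_subset hw.1 hw'.1)
  · exact (hw.2.union hw'.2).subset hsub

lemma vt_mem_UP {P : Set ℕ} {t : ℕ} (ht : t ∈ P) : vt A t ∈ UP A P := by
  refine ⟨fun _ => none, {t}, rfl, by simpa using ht, by simp, by simp, by simp⟩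

lemma const_mem_UP {P : Set ℕ} {w : ℕ → Option A} (hw : w ∈ WP A P) :
    (fun _ => w : A → ℕ → Option A) ∈ UP A P := by
  refine ⟨w, ∅, ?_, by simp, hw.1, hw.2, by simp⟩
  funext s n; simp [cfg]

lemma eval_UP_mem_WP {P : Set ℕ} {u : A → ℕ → Option A} (hu : u ∈ UP A P) (s : A) :
    u s ∈ WP A P := by
  obtain ⟨α, γ, rfl, hγ, hα, hαf, -⟩ := hu
  have hsub : {n | cfg A α γ s n ≠ none} ⊆ ↑γ ∪ {n | α n ≠ none} := by
    intro n hn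
    simp only [Set.mem_setOf_eq, cfg] at hn
    by_cases h : n ∈ γ
    · left; exact h
    · right; rw [if_neg h] at hn; exact hn
  constructor
  · exact hsub.trans (Set.union_subset hγ hα)
  · exact ((γ.finite_toSet).union hαf).subset hsub

lemma UP_mul {P : Set ℕ} : ∀ u ∈ UP A P, ∀ v ∈ UP A P, u * v ∈ UP A P := by
  classical
  rintro u ⟨α, γ, rfl, hγ, hα, hαf, hdisj⟩ v ⟨α', γ', rfl, hγ', hα', hαf', hdisj'⟩
  set γ'' := γ ∪ γ'.filter (fun n => α n = none) with hγ''
  set α'' := fun n => if n ∈ γ'' then none else ow (α n) (α' n) with hα''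
  refine ⟨α'', γ'', ?_, ?_, ?_, ?_, ?_⟩
  · funext s n
    show ow (cfg A α γ s n) (cfg A α' γ' s n) = cfg A α'' γ'' s n
    simp only [cfg]
    by_cases h1 : n ∈ γ
    · rw [if_pos h1, if_pos (Finset.mem_union_left _ h1)]
      rfl
    · rw [if_neg h1]
      by_cases h2 : α n = none
      · rw [h2, ow_none_left]
        by_cases h3 : n ∈ γ'
        · have : n ∈ γ'' := Finset.mem_union_right _ (Finset.mem_filter.2 ⟨h3, h2⟩)
          rw [if_pos h3, if_pos this]
        · have hn'' : n ∉ γ'' := by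
            simp only [hγ'', Finset.mem_union, Finset.mem_filter]
            push_neg
            exact ⟨h1, fun hc => absurd hc h3⟩
          rw [if_neg h3, if_neg hn'', hα'']
          simp only [if_neg hn'', h2, ow_none_left]
      · obtain ⟨a, ha⟩ := Option.ne_none_iff_exists'.1 h2
        have hn'' : n ∉ γ'' := by
          simp only [hγ'', Finset.mem_union, Finset.mem_filter]
          push_neg
          exact ⟨h1, fun _ => by rw [ha]; simp⟩
        rw [ha, if_neg hn'', hα'']
        simp only [if_neg hn'', ha, ow_some_left]
  · intro n hn
    rcases Finset.mem_union.1 hn with h | h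
    · exact hγ h
    · exact hγ' (Finset.mem_of_mem_filter _ h)
  · intro n hn
    simp only [hα'', Set.mem_setOf_eq] at hn
    split_ifs at hn with h
    · exact absurd rfl hn
    · by_cases h2 : α n = none
      · rw [h2, ow_none_left] at hn
        exact hα' hn
      · exact hα h2
  · have hsub : {n | α'' n ≠ none} ⊆ {n | α n ≠ none} ∪ {n | α' n ≠ none} := by
      intro n hn
      simp only [hα'', Set.mem_setOf_eq] at hn
      split_ifs at hn with h
      · exact absurd rfl hn
      · by_cases h2 : α n = none
        · rw [h2, ow_none_left] at hn; right; exact hn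
        · left; exact h2
    exact (hαf.union hαf').subset hsub
  · intro n hn
    simp only [hα'', if_pos hn]

end Core
section MainCore

variable {A : Type*} [Fintype A] [Nonempty A]

lemma main_core {r : ℕ} (𝔭 : Ultrafilter ℕ) (χ : (ℕ → Option A) → Fin r) :
    ∃ (x y : Ultrafilter (A → ℕ → Option A)) (c : Fin r),
      (∀ P ∈ 𝔭, UP A P ∈ x) ∧ (∀ P ∈ 𝔭, UP A P ∈ y) ∧
      {u : A → ℕ → Option A | ∀ s : A, χ (u s) = c} ∈
        x * Ultrafilter.map (vt A) 𝔭 * y := by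
  classical
  set q : Ultrafilter (A → ℕ → Option A) := Ultrafilter.map (vt A) 𝔭 with hq
  have hqSS : ∀ P ∈ 𝔭, UP A P ∈ q := by
    intro P hP
    rw [hq, Ultrafilter.mem_map]
    exact mem_of_superset hP fun t ht => vt_mem_UP ht
  -- the scalar semigroup of constant-concentrated ultrafilters
  set WWs : Set (Ultrafilter (ℕ → Option A)) := {w | ∀ P ∈ 𝔭, WP A P ∈ w} with hWWs
  have hWWcl : IsClosed WWs := by
    have : WWs = ⋂ P ∈ {P : Set ℕ | P ∈ 𝔭}, {w : Ultrafilter (ℕ → Option A) | WP A P ∈ w} := by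
      ext w; simp [hWWs]
    rw [this]
    exact isClosed_biInter fun P hP => ultrafilter_isClosed_basic _
  have hWWmul : ∀ w ∈ WWs, ∀ w' ∈ WWs, w * w' ∈ WWs := by
    intro w hw w' hw' P hP
    exact mem_mul_of_closed WP_mul (hw P hP) (hw' P hP)
  have hWWne : (pure (oneW A) : Ultrafilter (ℕ → Option A)) ∈ WWs := by
    intro P hP
    rw [Ultrafilter.mem_pure]
    exact oneW_mem_WP P
  obtain ⟨L, hLsub, hLne, hLcl, hLli, hLfac⟩ :=
    exists_min_cli Ultrafilter.continuous_mul_left WWs WWs hWWmul hWWcl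
      subset_rfl hWWcl ⟨_, hWWne⟩ hWWmul
  obtain ⟨p₀, hp₀L, hp₀idem⟩ :=
    exists_idempotent_in_compact_subsemigroup Ultrafilter.continuous_mul_left L hLne
      hLcl.isCompact (fun a ha b hb => hLli a (hLsub ha) b hb)
  have hp₀WW : p₀ ∈ WWs := hLsub hp₀L
  -- continuity of right multiplication in the product
  have hcontPV : ∀ R : A → Ultrafilter (ℕ → Option A),
      Continuous (fun X : A → Ultrafilter (ℕ → Option A) => X * R) := by
    intro R
    refine continuous_pi fun s => ?_
    show Continuous fun X : A → Ultrafilter (ℕ → Option A) => X s * R s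
    exact (Ultrafilter.continuous_mul_left (R s)).comp (continuous_apply s)
  -- the evaluation homomorphism
  set Ev : Ultrafilter (A → ℕ → Option A) → (A → Ultrafilter (ℕ → Option A)) :=
    fun x => fun s => Ultrafilter.map (fun u => u s) x with hEv
  have hEvmul : ∀ x y, Ev (x * y) = Ev x * Ev y := by
    intro x y
    funext s
    exact umap_mul (fun u => u s) (fun a b => rfl) x y
  have hEvcont : Continuous Ev := continuous_pi fun s => ucont_map _
  set SSs : Set (Ultrafilter (A → ℕ → Option A)) := {x | ∀ P ∈ 𝔭, UP A P ∈ x} with hSSs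
  have hSScl : IsClosed SSs := by
    have : SSs = ⋂ P ∈ {P : Set ℕ | P ∈ 𝔭},
        {x : Ultrafilter (A → ℕ → Option A) | UP A P ∈ x} := by
      ext x; simp [hSSs]
    rw [this]
    exact isClosed_biInter fun P hP => ultrafilter_isClosed_basic _
  have hSSmul : ∀ x ∈ SSs, ∀ y ∈ SSs, x * y ∈ SSs := by
    intro x hx y hy P hP
    exact mem_mul_of_closed UP_mul (hx P hP) (hy P hP)
  set WAv : Set (A → Ultrafilter (ℕ → Option A)) := {X | ∀ s, X s ∈ WWs} with hWAv
  have hWAcl : IsClosed WAv := by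
    have : WAv = ⋂ s : A, (fun X : A → Ultrafilter (ℕ → Option A) => X s) ⁻¹' WWs := by
      ext X; simp [hWAv]
    rw [this]
    exact isClosed_iInter fun s => hWWcl.preimage (continuous_apply s)
  have hWAmul : ∀ X ∈ WAv, ∀ Y ∈ WAv, X * Y ∈ WAv := by
    intro X hX Y hY s
    exact hWWmul _ (hX s) _ (hY s)
  -- the generated closed subsemigroup 𝒟
  set Coll : Set (Set (A → Ultrafilter (ℕ → Option A))) :=
    {D | D ⊆ WAv ∧ IsClosed D ∧ (∀ X ∈ D, ∀ Y ∈ D, X * Y ∈ D) ∧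
      (∀ w ∈ WWs, (fun _ => w) ∈ D) ∧ Ev q ∈ D} with hColl
  set 𝒟 : Set (A → Ultrafilter (ℕ → Option A)) := ⋂₀ Coll with h𝒟
  have hEvqWA : Ev q ∈ WAv := by
    intro s P hP
    show WP A P ∈ Ultrafilter.map (fun u : A → ℕ → Option A => u s) (Ultrafilter.map (vt A) 𝔭)
    rw [Ultrafilter.map_map, Ultrafilter.mem_map]
    exact mem_of_superset hP fun t ht => eval_UP_mem_WP (vt_mem_UP ht) s
  have hWAColl : WAv ∈ Coll := by
    refine ⟨subset_rfl, hWAcl, hWAmul, ?_, hEvqWA⟩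
    intro w hw s
    exact hw
  have h𝒟Coll : 𝒟 ∈ Coll := by
    refine ⟨(Set.sInter_subset_of_mem hWAColl), isClosed_sInter fun D hD => hD.2.1, ?_, ?_, ?_⟩
    · intro X hX Y hY
      rw [Set.mem_sInter] at hX hY ⊢
      exact fun D hD => hD.2.2.1 X (hX D hD) Y (hY D hD)
    · intro w hw
      rw [Set.mem_sInter]
      exact fun D hD => hD.2.2.2.1 w hw
    · rw [Set.mem_sInter]
      exact fun D hD => hD.2.2.2.2
  have hEvSSColl : Ev '' SSs ∈ Coll := by
    refine ⟨?_, (hSScl.isCompact.image hEvcont).isClosed, ?_, ?_, ⟨q, hqSS, rfl⟩⟩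
    · rintro _ ⟨x, hx, rfl⟩ s P hP
      show WP A P ∈ Ultrafilter.map (fun u : A → ℕ → Option A => u s) x
      rw [Ultrafilter.mem_map]
      exact mem_of_superset (hx P hP) fun u hu => eval_UP_mem_WP hu s
    · rintro _ ⟨x, hx, rfl⟩ _ ⟨y, hy, rfl⟩
      exact ⟨x * y, hSSmul x hx y hy, hEvmul x y⟩
    · intro w hw
      refine ⟨Ultrafilter.map (fun ww => (fun _ => ww : A → ℕ → Option A)) w, ?_, ?_⟩
      · intro P hP
        rw [Ultrafilter.mem_map]
        exact mem_of_superset (hw P hP) fun ww hww => const_mem_UP hww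
      · funext s
        show Ultrafilter.map (fun u : A → ℕ → Option A => u s)
            (Ultrafilter.map (fun ww => (fun _ => ww : A → ℕ → Option A)) w) = w
        rw [Ultrafilter.map_map]
        exact Ultrafilter.map_id _
  have h𝒟sub : 𝒟 ⊆ Ev '' SSs := Set.sInter_subset_of_mem hEvSSColl
  obtain ⟨h𝒟WA, h𝒟cl, h𝒟mul, h𝒟diag, h𝒟q⟩ := h𝒟Coll
  -- the diagonal idempotent E
  set E : A → Ultrafilter (ℕ → Option A) := fun _ => p₀ with hE'
  have hE𝒟 : E ∈ 𝒟 := h𝒟diag p₀ hp₀WW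
  have hEidem : E * E = E := funext fun s => hp₀idem
  -- minimal closed left ideal of 𝒟 inside 𝒟 * E
  obtain ⟨Λ, hΛsub, hΛne, hΛcl, hΛli, hΛfac⟩ :=
    exists_min_cli hcontPV 𝒟 ((fun X => X * E) '' 𝒟) h𝒟mul h𝒟cl
      (by rintro _ ⟨X, hX, rfl⟩; exact h𝒟mul X hX E hE𝒟)
      ((h𝒟cl.isCompact.image (hcontPV E)).isClosed)
      ⟨E * E, E, hE𝒟, rfl⟩
      (by rintro Z hZ _ ⟨X, hX, rfl⟩; exact ⟨Z * X, h𝒟mul Z hZ X hX, mul_assoc Z X E⟩)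
  obtain ⟨f, hfΛ, hfidem⟩ :=
    exists_idempotent_in_compact_subsemigroup hcontPV Λ hΛne hΛcl.isCompact
      (fun a ha b hb => hΛli a ((by rintro _ ⟨X, hX, rfl⟩; exact h𝒟mul X hX E hE𝒟 : 
        ((fun X => X * E) '' 𝒟) ⊆ 𝒟) (hΛsub ha)) b hb)
  -- the product minimal left ideal L'
  set L' : Set (A → Ultrafilter (ℕ → Option A)) := {X | ∀ s, X s ∈ L} with hL'
  have himgL' : ((fun X => X * E) '' 𝒟) ⊆ L' := by
    rintro _ ⟨X, hX, rfl⟩ s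
    have hXW : X s ∈ WWs := h𝒟WA hX s
    show X s * p₀ ∈ L
    rw [← hLfac p₀ hp₀L]
    exact ⟨X s, hXW, rfl⟩
  have hfL' : f ∈ L' := himgL' (hΛsub hfΛ)
  have hEL' : E ∈ L' := fun s => hp₀L
  have hWAfacL' : (fun X => X * f) '' WAv = L' := by
    apply Set.Subset.antisymm
    · rintro _ ⟨X, hX, rfl⟩ s
      have hfs : f s ∈ L := hfL' s
      show X s * f s ∈ L
      rw [← hLfac (f s) hfs]
      exact ⟨X s, hX s, rfl⟩
    · intro Z hZ
      have : ∀ s, ∃ W ∈ WWs, W * f s = Z s := by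
        intro s
        have := hZ s
        rw [← hLfac (f s) (hfL' s)] at this
        obtain ⟨W, hW, hWf⟩ := this
        exact ⟨W, hW, hWf⟩
      choose W hW hWf using this
      exact ⟨W, hW, funext hWf⟩
  have hEf : E * f = E := by
    have : E ∈ (fun X => X * f) '' WAv := by rw [hWAfacL']; exact hEL'
    obtain ⟨Z, hZ, hZf0⟩ := this
    have hZf : Z * f = E := hZf0
    calc E * f = Z * f * f := by rw [hZf]
    _ = Z * (f * f) := mul_assoc Z f f
    _ = Z * f := by rw [hfidem]
    _ = E := hZf
  have hEΛ : E ∈ Λ := by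
    rw [← hEf]
    exact hΛli E hE𝒟 f hfΛ
  -- the two-sided ideal generated by Ev q
  set J : Set (A → Ultrafilter (ℕ → Option A)) :=
    {Z | ∃ X ∈ 𝒟, ∃ Y ∈ 𝒟, Z = X * Ev q * Y} with hJ
  have honevec : (fun _ => (pure (oneW A) : Ultrafilter (ℕ → Option A))) ∈ 𝒟 :=
    h𝒟diag _ hWWne
  have honemul : ∀ Z : A → Ultrafilter (ℕ → Option A),
      (fun _ => (pure (oneW A) : Ultrafilter (ℕ → Option A))) * Z = Z := by
    intro Z
    funext s
    exact pure_one_mul (oneW A) oneW_mul (Z s)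
  have hJΛ : Ev q * E ∈ J ∩ Λ := by
    constructor
    · exact ⟨_, honevec, E, hE𝒟, by rw [mul_assoc, honemul]⟩
    · exact hΛli (Ev q) h𝒟q E hEΛ
  have hJli : ∀ Z ∈ 𝒟, ∀ W ∈ J ∩ Λ, Z * W ∈ J ∩ Λ := by
    rintro Z hZ W ⟨⟨X, hX, Y, hY, rfl⟩, hWΛ⟩
    constructor
    · refine ⟨Z * X, h𝒟mul Z hZ X hX, Y, hY, ?_⟩
      rw [← mul_assoc, ← mul_assoc]
    · exact hΛli Z hZ _ hWΛ
  have hΛJ : Λ ⊆ J := by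
    have hfac := hΛfac (Ev q * E) hJΛ.2
    rw [← hfac]
    rintro _ ⟨Z, hZ, rfl⟩
    exact (hJli Z hZ _ hJΛ).1
  obtain ⟨X, hX𝒟, Y, hY𝒟, hEXY⟩ := hΛJ hEΛ
  obtain ⟨x, hxSS, hXx⟩ := h𝒟sub hX𝒟
  obtain ⟨y, hySS, hYy⟩ := h𝒟sub hY𝒟
  -- marginals of the triple product are all p₀
  have hmarg : ∀ s : A, Ultrafilter.map (fun u => u s) (x * q * y) = p₀ := by
    intro s
    have : Ev (x * q * y) = E := by
      rw [hEvmul, hEvmul, hXx, hYy, ← hEXY]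
    exact congrFun this s
  -- the monochromatic color
  have hcolor : ∃ c : Fin r, χ ⁻¹' {c} ∈ p₀ := by
    by_contra hcon
    push_neg at hcon
    have hall : ∀ c : Fin r, (χ ⁻¹' {c})ᶜ ∈ p₀ := fun c =>
      Ultrafilter.compl_mem_iff_notMem.2 (hcon c)
    have : (⋂ c : Fin r, (χ ⁻¹' {c})ᶜ) ∈ p₀ := iInter_mem.2 hall
    obtain ⟨w, hw⟩ := Ultrafilter.nonempty_of_mem this
    rw [Set.mem_iInter] at hw
    exact hw (χ w) rfl
  obtain ⟨c, hc⟩ := hcolor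
  refine ⟨x, y, c, hxSS, hySS, ?_⟩
  have : {u : A → ℕ → Option A | ∀ s : A, χ (u s) = c} =
      ⋂ s : A, (fun u : A → ℕ → Option A => u s) ⁻¹' (χ ⁻¹' {c}) := by
    ext u; simp
  rw [this]
  refine iInter_mem.2 fun s => ?_
  show (fun u : A → ℕ → Option A => u s) ⁻¹' (χ ⁻¹' {c}) ∈ x * q * y
  exact Ultrafilter.mem_map.1 (by rw [hmarg s]; exact hc)

end MainCore
end BHJ
attribute [local instance] BHJ.wsg Ultrafilter.semigroup

theorem beiglboeck_hales_jewett (A : Type*) [Fintype A] [Nonempty A]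
    (𝔽 : Set (Finset ℕ))
    (hPR : ∀ (r : ℕ) (κ : ℕ → Fin r), ∃ (i : Fin r) (F : Finset ℕ),
      F ∈ 𝔽 ∧ ∀ n ∈ F, κ n = i)
    (hNS : ∀ F ∈ 𝔽, F.card ≠ 1)
    (r : ℕ) (χ : (ℕ → Option A) → Fin r) :
    ∃ (α : ℕ → Option A) (γ F : Finset ℕ) (c : Fin r),
      {n | α n ≠ none}.Finite ∧ F ∈ 𝔽 ∧
      (∀ n ∈ γ, α n = none) ∧ (∀ n ∈ F, α n = none) ∧ Disjoint γ F ∧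
      ∀ (s : A), ∀ t ∈ F,
        χ (fun n => if n ∈ insert t γ then some s else α n) = c := by
  classical
  by_cases hne : ∅ ∈ 𝔽
  · refine ⟨fun _ => none, ∅, ∅, χ (fun _ => none), ?_, hne, by simp, by simp, by simp,
      fun s t ht => absurd ht (by simp)⟩
    have h : {n : ℕ | (fun _ => (none : Option A)) n ≠ none} = ∅ := by simp
    rw [h]; exact Set.finite_empty
  obtain ⟨𝔭, hIoi, hp⟩ := BHJ.exists_good_uf 𝔽 hPR hNS hne
  obtain ⟨x, y, c, hxSS, hySS, hB⟩ := BHJ.main_core 𝔭 χ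
  set B := {u : A → ℕ → Option A | ∀ s : A, χ (u s) = c} with hBdef
  rw [mul_assoc, BHJ.umem_mul] at hB
  have hU : BHJ.UP A Set.univ ∈ x := hxSS Set.univ Filter.univ_mem
  obtain ⟨u₁, hu₁⟩ := Ultrafilter.nonempty_of_mem (Filter.inter_mem hB hU)
  obtain ⟨hu₁A, hu₁U⟩ := hu₁
  obtain ⟨α₁, γ₁, rfl, -, -, hα₁f, hd₁⟩ := hu₁U
  have hA : {z | BHJ.cfg A α₁ γ₁ * z ∈ B} ∈ Ultrafilter.map (BHJ.vt A) 𝔭 * y := hu₁A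
  rw [BHJ.umem_mul, Ultrafilter.mem_map] at hA
  -- hA : (vt A) ⁻¹' {v | {b | v * b ∈ {z | cfg α₁ γ₁ * z ∈ B}} ∈ y} ∈ 𝔭
  set n₀ := (γ₁ ∪ hα₁f.toFinset).sup id with hn₀
  obtain ⟨F, hF𝔽, hFsub⟩ := hp _ hA n₀
  set N₁ := max n₀ (F.sup id) with hN₁
  have hb₁γ : ∀ n ∈ γ₁, n ≤ n₀ := fun n hn =>
    Finset.le_sup (f := id) (Finset.mem_union_left _ hn)
  have hb₁α : ∀ n, α₁ n ≠ none → n ≤ n₀ := fun n hn =>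
    Finset.le_sup (f := id) (Finset.mem_union_right _ (hα₁f.mem_toFinset.2 hn))
  have hFlow : ∀ t ∈ F, n₀ < t := fun t ht => (hFsub ht).2
  have hFG : ∀ t ∈ F, {b | BHJ.vt A t * b ∈ {z | BHJ.cfg A α₁ γ₁ * z ∈ B}} ∈ y :=
    fun t ht => (hFsub ht).1
  have hFhigh : ∀ t ∈ F, t ≤ N₁ := fun t ht =>
    le_trans (Finset.le_sup (f := id) ht) (le_max_right _ _)
  have hYB : (⋂ t ∈ (↑F : Set ℕ), {b | BHJ.vt A t * b ∈ {z | BHJ.cfg A α₁ γ₁ * z ∈ B}}) ∈ y :=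
    (Filter.biInter_mem F.finite_toSet).2 fun t ht => hFG t ht
  have hUP2 : BHJ.UP A (Set.Ioi N₁) ∈ y := hySS _ (hIoi N₁)
  obtain ⟨u₂, hu₂⟩ := Ultrafilter.nonempty_of_mem (Filter.inter_mem hYB hUP2)
  obtain ⟨hu₂B, hu₂U⟩ := hu₂
  obtain ⟨α₂, γ₂, rfl, hγ₂P, hα₂P, hα₂f, hd₂⟩ := hu₂U
  have hγ₂low : ∀ n ∈ γ₂, N₁ < n := fun n hn => hγ₂P hn
  have hα₂low : ∀ n, α₂ n ≠ none → N₁ < n := fun n hn => hα₂P hn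
  refine ⟨fun n => BHJ.ow (α₁ n) (α₂ n), γ₁ ∪ γ₂, F, c, ?_, hF𝔽, ?_, ?_, ?_, ?_⟩
  · -- finiteness
    refine (hα₁f.union hα₂f).subset ?_
    intro n hn
    simp only [Set.mem_setOf_eq] at hn
    by_cases h : α₁ n = none
    · right; rw [h, BHJ.ow_none_left] at hn; exact hn
    · left; exact h
  · -- none on γ
    intro n hn
    rcases Finset.mem_union.1 hn with h | h
    · refine BHJ.ow_eq_none (hd₁ n h) ?_
      by_contra hc2
      exact absurd (le_trans (hb₁γ n h) (le_max_left _ _)) (not_le.2 (hα₂low n hc2))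
    · refine BHJ.ow_eq_none ?_ (hd₂ n h)
      by_contra hc2
      exact absurd (le_trans (hb₁α n hc2) (le_max_left _ _)) (not_le.2 (hγ₂low n h))
  · -- none on F
    intro n hn
    refine BHJ.ow_eq_none ?_ ?_
    · by_contra hc2
      exact absurd (hb₁α n hc2) (not_le.2 (hFlow n hn))
    · by_contra hc2
      exact absurd (hFhigh n hn) (not_le.2 (hα₂low n hc2))
  · -- disjointness
    rw [Finset.disjoint_left]
    intro n hn hnF
    rcases Finset.mem_union.1 hn with h | h
    · have h1 := hb₁γ n h
      have h2 := hFlow n hnF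
      omega
    · have h1 := hγ₂low n h
      have h2 := hFhigh n hnF
      omega
  · -- the colors
    intro s t ht
    have hmem : BHJ.cfg A α₁ γ₁ * (BHJ.vt A t * BHJ.cfg A α₂ γ₂) ∈ B := by
      have := Set.mem_iInter₂.1 hu₂B t (by exact_mod_cast ht)
      exact this
    have hcol : χ ((BHJ.cfg A α₁ γ₁ * (BHJ.vt A t * BHJ.cfg A α₂ γ₂)) s) = c := hmem s
    have htn₀ : n₀ < t := hFlow t ht
    have htN₁ : t ≤ N₁ := hFhigh t ht
    have hword : (BHJ.cfg A α₁ γ₁ * (BHJ.vt A t * BHJ.cfg A α₂ γ₂)) s =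
        fun n => if n ∈ insert t (γ₁ ∪ γ₂) then some s else BHJ.ow (α₁ n) (α₂ n) := by
      funext n
      show BHJ.ow (BHJ.cfg A α₁ γ₁ s n)
          (BHJ.ow (BHJ.cfg A (fun _ => none) {t} s n) (BHJ.cfg A α₂ γ₂ s n)) = _
      simp only [BHJ.cfg]
      by_cases h1 : n ∈ γ₁
      · rw [if_pos h1, if_pos (Finset.mem_insert_of_mem (Finset.mem_union_left _ h1))]
        rfl
      · rw [if_neg h1]
        by_cases h2 : α₁ n = none
        · rw [h2, BHJ.ow_none_left]
          by_cases h3 : n = t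
          · subst h3
            rw [if_pos (Finset.mem_singleton_self n), BHJ.ow_some_left,
              if_pos (Finset.mem_insert_self _ _)]
          · rw [if_neg (by simpa using h3), BHJ.ow_none_left]
            by_cases h4 : n ∈ γ₂
            · rw [if_pos h4,
                if_pos (Finset.mem_insert_of_mem (Finset.mem_union_right _ h4))]
            · rw [if_neg h4, if_neg (by
                intro hcon
                rcases Finset.mem_insert.1 hcon with hcon | hcon
                · exact h3 hcon
                · rcases Finset.mem_union.1 hcon with hcon | hcon
                  · exact h1 hcon
                  · exact h4 hcon)]
              exact (BHJ.ow_none_left _).symm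
        · obtain ⟨a, ha⟩ := Option.ne_none_iff_exists'.1 h2
          have hn₀' : n ≤ n₀ := hb₁α n h2
          have hnt : n ≠ t := by omega
          have hnγ₂ : n ∉ γ₂ := by
            intro hcon
            have := hγ₂low n hcon
            have : n ≤ N₁ := le_trans hn₀' (le_max_left _ _)
            omega
          rw [ha, BHJ.ow_some_left, if_neg (by
            intro hcon
            rcases Finset.mem_insert.1 hcon with hcon | hcon
            · exact hnt hcon
            · rcases Finset.mem_union.1 hcon with hcon | hcon
              · exact h1 hcon
              · exact hnγ₂ hcon)]
          exact (BHJ.ow_some_left _ _).symm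
    rw [← hword]
    exact hcol
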